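/- Let z ∈ ℝ. For every continuously differentiable path h = (h¹, h²) : [0,1] → ℝ² with h(0) = (0,0) and signed area A(h) := (1/2)∫₀¹ (h¹(t)(h²)′(t) − h²(t)(h¹)′(t)) dt equal to z, one has (1/2)∫₀¹ ((h¹)′(t)² + (h²)′(t)²) dt ≥ π|z|. Moreover this bound is attained: for z > 0 the half-circle h(t) = ρ(sin(πt), 1 − cos(πt)) with ρ = √(2z/π) satisfies h(0) = 0, A(h) = z, and has energy exactly πz (and analogously for z < 0 with reversed orientation). -/

import Mathlib

/-!
Write the path in a frame rotating with angular speed `π / 2`. In the rotating coordinates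
`(u, v)`, which still vanish at `0`, the integrand `|h'|² - π (h¹ h²' - h² h¹')` becomes
`(u'² - (π/2)² u²) + (v'² - (π/2)² v²)`, and each of these has nonnegative integral by
Wirtinger's inequality for functions vanishing at one endpoint of `[0, 1]`. That inequality comes
from Picone's identity with the weight `λ tan (λ (1 - t))`, `λ < π / 2`, which is regular on the
whole interval, and letting `λ → π / 2`. Exchanging `h¹` and `h²` gives the bound for `-z`.
-/

open MeasureTheory

/-- First component of the half-circle of radius `√(2z/π)` starting at the origin. -/
noncomputable def c19₁ (z t : ℝ) : ℝ :=
  Real.sqrt (2 * z / Real.pi) * Real.sin (Real.pi * t)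

/-- Second component of the half-circle of radius `√(2z/π)` starting at the origin. -/
noncomputable def c19₂ (z t : ℝ) : ℝ :=
  Real.sqrt (2 * z / Real.pi) * (1 - Real.cos (Real.pi * t))

open Set Real Filter Topology

section Wirtinger

variable {a b lam : ℝ} {u u' : ℝ → ℝ}

theorem sq_mul_integral_sq_le_integral_deriv_sq (hab : a ≤ b) (hlam : 0 ≤ lam)
    (hlam_lt : lam * (b - a) < π / 2)
    (hu : ∀ t ∈ Icc a b, HasDerivWithinAt u (u' t) (Icc a b) t)
    (hu' : ContinuousOn u' (Icc a b)) (hua : u a = 0) :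
    lam ^ 2 * ∫ t in a..b, u t ^ 2 ≤ ∫ t in a..b, u' t ^ 2 := by
  -- `w = φ' / φ` for `φ t = cos (lam * (b - t)) > 0` solves the Riccati equation
  -- `w' + w² = -lam²`, whence Picone's identity `u'² - lam² u² = (u' - w u)² + (w u²)'`;
  -- the boundary term `w u²` vanishes at `a` because `u a = 0` and at `b` because `w b = 0`.
  set w : ℝ → ℝ := fun t => lam * tan (lam * (b - t))
  have hcos : ∀ t ∈ Icc a b, 0 < cos (lam * (b - t)) := fun t ht =>
    cos_pos_of_mem_Ioo ⟨by nlinarith [pi_pos, ht.2], by nlinarith [ht.1]⟩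
  have hw : ∀ t ∈ Icc a b, HasDerivAt w (lam * (1 / cos (lam * (b - t)) ^ 2 * -lam)) t := by
    intro t ht
    have hinner : HasDerivAt (fun t => lam * (b - t)) (-lam) t := by
      simpa using ((hasDerivAt_id t).const_sub b).const_mul lam
    exact ((hasDerivAt_tan (hcos t ht).ne').comp t hinner).const_mul lam
  have huc : ContinuousOn u (Icc a b) := fun t ht => (hu t ht).continuousWithinAt
  have hwc : ContinuousOn w (Icc a b) := fun t ht => (hw t ht).continuousAt.continuousWithinAt
  set g : ℝ → ℝ := fun t => u' t ^ 2 - lam ^ 2 * u t ^ 2 - (u' t - w t * u t) ^ 2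
  have hpicone : ∀ t ∈ Icc a b,
      HasDerivWithinAt (fun t => w t * u t ^ 2) (g t) (Icc a b) t := by
    intro t ht
    refine ((hw t ht).hasDerivWithinAt.mul ((hu t ht).pow 2)).congr_deriv ?_
    have hc := (hcos t ht).ne'
    simp only [g, w, tan_eq_sin_div_cos, Pi.pow_apply]
    field_simp
    linear_combination (lam ^ 2 * u t ^ 2) * sin_sq_add_cos_sq (lam * (b - t))
  have hint : ∀ f : ℝ → ℝ, ContinuousOn f (Icc a b) → IntervalIntegrable f volume a b :=
    fun f hf => hf.intervalIntegrable_of_Icc hab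
  have hg : ∫ t in a..b, g t = 0 := by
    rw [intervalIntegral.integral_eq_sub_of_hasDeriv_right_of_le hab (by fun_prop)
      (fun t ht => ((hpicone t (Ioo_subset_Icc_self ht)).hasDerivAt
        (Icc_mem_nhds ht.1 ht.2)).hasDerivWithinAt) (hint _ (by fun_prop))]
    simp [w, hua]
  rw [intervalIntegral.integral_sub, intervalIntegral.integral_sub,
    intervalIntegral.integral_const_mul] at hg
  all_goals try exact hint _ (by fun_prop)
  have hsq : 0 ≤ ∫ t in a..b, (u' t - w t * u t) ^ 2 :=
    intervalIntegral.integral_nonneg hab fun t _ => sq_nonneg _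
  linarith

theorem wirtinger_inequality_of_eq_zero_left (hab : a < b)
    (hu : ∀ t ∈ Icc a b, HasDerivWithinAt u (u' t) (Icc a b) t)
    (hu' : ContinuousOn u' (Icc a b)) (hua : u a = 0) :
    (π / (2 * (b - a))) ^ 2 * ∫ t in a..b, u t ^ 2 ≤ ∫ t in a..b, u' t ^ 2 := by
  have hba : 0 < b - a := sub_pos.mpr hab
  have hc : 0 < π / (2 * (b - a)) := by positivity
  have hlim : Tendsto (fun lam : ℝ => lam ^ 2 * ∫ t in a..b, u t ^ 2)
      (𝓝[<] (π / (2 * (b - a)))) (𝓝 ((π / (2 * (b - a))) ^ 2 * ∫ t in a..b, u t ^ 2)) :=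
    (((continuous_pow 2).mul continuous_const).tendsto _).mono_left nhdsWithin_le_nhds
  refine le_of_tendsto hlim ?_
  filter_upwards [Ioo_mem_nhdsLT hc] with lam hlam
  refine sq_mul_integral_sq_le_integral_deriv_sq hab.le hlam.1.le ?_ hu hu' hua
  calc lam * (b - a) < π / (2 * (b - a)) * (b - a) := mul_lt_mul_of_pos_right hlam.2 hba
    _ = π / 2 := by field_simp

end Wirtinger

section Isoperimetric

variable {a b : ℝ} {h₁ h₂ h₁' h₂' : ℝ → ℝ}

theorem pi_div_mul_integral_area_le_integral_energy (hab : a < b)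
    (hh₁ : ∀ t ∈ Icc a b, HasDerivWithinAt h₁ (h₁' t) (Icc a b) t)
    (hh₂ : ∀ t ∈ Icc a b, HasDerivWithinAt h₂ (h₂' t) (Icc a b) t)
    (hh₁' : ContinuousOn h₁' (Icc a b)) (hh₂' : ContinuousOn h₂' (Icc a b))
    (h₁a : h₁ a = 0) (h₂a : h₂ a = 0) :
    π / (b - a) * ∫ t in a..b, (h₁ t * h₂' t - h₂ t * h₁' t)
      ≤ ∫ t in a..b, (h₁' t ^ 2 + h₂' t ^ 2) := by
  set ω := π / (2 * (b - a))
  -- In the frame rotating with angular speed `ω`, `|h'|² - 2ω (h₁ h₂' - h₂ h₁')` becomes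
  -- `(u'² - ω² u²) + (v'² - ω² v²)`, and `ω = π / (2 (b - a))` is the Wirtinger constant.
  set u : ℝ → ℝ := fun t => h₁ t * cos (ω * t) + h₂ t * sin (ω * t)
  set v : ℝ → ℝ := fun t => h₂ t * cos (ω * t) - h₁ t * sin (ω * t)
  set u' : ℝ → ℝ := fun t => h₁' t * cos (ω * t) + h₂' t * sin (ω * t) + ω * v t
  set v' : ℝ → ℝ := fun t => h₂' t * cos (ω * t) - h₁' t * sin (ω * t) - ω * u t
  have hlin : ∀ t, HasDerivAt (fun t => ω * t) ω t := fun t => by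
    simpa using (hasDerivAt_id t).const_mul ω
  have hu : ∀ t ∈ Icc a b, HasDerivWithinAt u (u' t) (Icc a b) t := by
    intro t ht
    refine (((hh₁ t ht).mul (hlin t).cos.hasDerivWithinAt).add
      ((hh₂ t ht).mul (hlin t).sin.hasDerivWithinAt)).congr_deriv ?_
    simp only [u', v]
    ring
  have hv : ∀ t ∈ Icc a b, HasDerivWithinAt v (v' t) (Icc a b) t := by
    intro t ht
    refine (((hh₂ t ht).mul (hlin t).cos.hasDerivWithinAt).sub
      ((hh₁ t ht).mul (hlin t).sin.hasDerivWithinAt)).congr_deriv ?_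
    simp only [v', u]
    ring
  have hh₁c : ContinuousOn h₁ (Icc a b) := fun t ht => (hh₁ t ht).continuousWithinAt
  have hh₂c : ContinuousOn h₂ (Icc a b) := fun t ht => (hh₂ t ht).continuousWithinAt
  have hu'c : ContinuousOn u' (Icc a b) := by fun_prop
  have hv'c : ContinuousOn v' (Icc a b) := by fun_prop
  have hwu := wirtinger_inequality_of_eq_zero_left hab hu hu'c (by simp [u, h₁a, h₂a])
  have hwv := wirtinger_inequality_of_eq_zero_left hab hv hv'c (by simp [v, h₁a, h₂a])
  have hint : ∀ f : ℝ → ℝ, ContinuousOn f (Icc a b) → IntervalIntegrable f volume a b :=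
    fun f hf => hf.intervalIntegrable_of_Icc hab.le
  have hframe : ∫ t in a..b, (u' t ^ 2 + v' t ^ 2 - ω ^ 2 * (u t ^ 2 + v t ^ 2))
      = ∫ t in a..b, (h₁' t ^ 2 + h₂' t ^ 2 - 2 * ω * (h₁ t * h₂' t - h₂ t * h₁' t)) := by
    refine intervalIntegral.integral_congr fun t _ => ?_
    simp only [u', v', u, v]
    linear_combination (h₁' t ^ 2 + h₂' t ^ 2 - 2 * ω * (h₁ t * h₂' t - h₂ t * h₁' t))
      * sin_sq_add_cos_sq (ω * t)
  rw [intervalIntegral.integral_sub, intervalIntegral.integral_add,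
    intervalIntegral.integral_const_mul, intervalIntegral.integral_add,
    intervalIntegral.integral_sub, intervalIntegral.integral_const_mul] at hframe
  all_goals try exact hint _ (by fun_prop)
  have hω : 2 * ω = π / (b - a) := by simp only [ω]; field_simp
  rw [← hω]
  linarith

theorem pi_div_mul_abs_integral_area_le_integral_energy (hab : a < b)
    (hh₁ : ∀ t ∈ Icc a b, HasDerivWithinAt h₁ (h₁' t) (Icc a b) t)
    (hh₂ : ∀ t ∈ Icc a b, HasDerivWithinAt h₂ (h₂' t) (Icc a b) t)
    (hh₁' : ContinuousOn h₁' (Icc a b)) (hh₂' : ContinuousOn h₂' (Icc a b))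
    (h₁a : h₁ a = 0) (h₂a : h₂ a = 0) :
    π / (b - a) * |∫ t in a..b, (h₁ t * h₂' t - h₂ t * h₁' t)|
      ≤ ∫ t in a..b, (h₁' t ^ 2 + h₂' t ^ 2) := by
  have hpos := pi_div_mul_integral_area_le_integral_energy hab hh₁ hh₂ hh₁' hh₂' h₁a h₂a
  have hneg := pi_div_mul_integral_area_le_integral_energy hab hh₂ hh₁ hh₂' hh₁' h₂a h₁a
  have hswap : ∫ t in a..b, (h₂ t * h₁' t - h₁ t * h₂' t)
      = -∫ t in a..b, (h₁ t * h₂' t - h₂ t * h₁' t) := by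
    rw [← intervalIntegral.integral_neg]
    exact intervalIntegral.integral_congr fun t _ => by ring
  have hcomm : ∫ t in a..b, (h₂' t ^ 2 + h₁' t ^ 2) = ∫ t in a..b, (h₁' t ^ 2 + h₂' t ^ 2) :=
    intervalIntegral.integral_congr fun t _ => by ring
  rw [hswap, hcomm] at hneg
  rcases abs_cases (∫ t in a..b, (h₁ t * h₂' t - h₂ t * h₁' t)) with ⟨habs, _⟩ | ⟨habs, _⟩ <;>
    rw [habs] <;> linarith

end Isoperimetric

section HalfCircle

variable {z : ℝ}

theorem hasDerivAt_c19₁ (t : ℝ) :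
    HasDerivAt (c19₁ z) (√(2 * z / π) * (cos (π * t) * π)) t := by
  unfold c19₁
  have := ((hasDerivAt_id t).const_mul π).sin.const_mul √(2 * z / π)
  simpa using this

theorem hasDerivAt_c19₂ (t : ℝ) :
    HasDerivAt (c19₂ z) (√(2 * z / π) * (sin (π * t) * π)) t := by
  unfold c19₂
  have := (((hasDerivAt_id t).const_mul π).cos.const_sub 1).const_mul √(2 * z / π)
  simpa using this

theorem derivWithin_c19₁ {t : ℝ} (ht : t ∈ Icc (0 : ℝ) 1) :
    derivWithin (c19₁ z) (Icc 0 1) t = √(2 * z / π) * (cos (π * t) * π) :=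
  (hasDerivAt_c19₁ t).hasDerivWithinAt.derivWithin (uniqueDiffOn_Icc zero_lt_one t ht)

theorem derivWithin_c19₂ {t : ℝ} (ht : t ∈ Icc (0 : ℝ) 1) :
    derivWithin (c19₂ z) (Icc 0 1) t = √(2 * z / π) * (sin (π * t) * π) :=
  (hasDerivAt_c19₂ t).hasDerivWithinAt.derivWithin (uniqueDiffOn_Icc zero_lt_one t ht)

theorem integral_one_sub_cos_pi_mul : ∫ t in (0:ℝ)..1, (1 - cos (π * t)) = 1 := by
  rw [intervalIntegral.integral_sub intervalIntegrable_const
    ((by fun_prop : Continuous fun t => cos (π * t)).intervalIntegrable 0 1),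
    intervalIntegral.integral_comp_mul_left (fun x => cos x) pi_ne_zero]
  simp

theorem area_c19 (hz : 0 ≤ z) :
    (1/2) * (∫ t in (0:ℝ)..1,
      (c19₁ z t * derivWithin (c19₂ z) (Icc 0 1) t
        - c19₂ z t * derivWithin (c19₁ z) (Icc 0 1) t)) = z := by
  have hρ : √(2 * z / π) ^ 2 = 2 * z / π := sq_sqrt (by positivity)
  rw [intervalIntegral.integral_congr (g := fun t => √(2 * z / π) ^ 2 * π * (1 - cos (π * t)))
    fun t ht => by
      rw [uIcc_of_le zero_le_one] at ht
      simp only [derivWithin_c19₁ ht, derivWithin_c19₂ ht, c19₁, c19₂]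
      linear_combination (π * √(2 * z / π) ^ 2) * sin_sq_add_cos_sq (π * t),
    intervalIntegral.integral_const_mul, integral_one_sub_cos_pi_mul, hρ]
  field_simp

theorem energy_c19 (hz : 0 ≤ z) :
    (1/2) * (∫ t in (0:ℝ)..1,
      ((derivWithin (c19₁ z) (Icc 0 1) t) ^ 2 + (derivWithin (c19₂ z) (Icc 0 1) t) ^ 2))
      = π * z := by
  have hρ : √(2 * z / π) ^ 2 = 2 * z / π := sq_sqrt (by positivity)
  rw [intervalIntegral.integral_congr (g := fun _ => √(2 * z / π) ^ 2 * π ^ 2)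
    fun t ht => by
      rw [uIcc_of_le zero_le_one] at ht
      simp only [derivWithin_c19₁ ht, derivWithin_c19₂ ht]
      linear_combination (π ^ 2 * √(2 * z / π) ^ 2) * cos_sq_add_sin_sq (π * t),
    intervalIntegral.integral_const, hρ]
  field_simp
  ring

end HalfCircle

/-- Case (II) of the Heisenberg example (Dido's problem, energy form): every C¹ path
starting at the origin with signed area `z` has energy at least `π|z|`, and for `z > 0`
the half-circle of radius `√(2z/π)` attains the bound. -/
theorem stmt_19 (z : ℝ) :
    (∀ h1 h2 : ℝ → ℝ,
      ContDiffOn ℝ 1 h1 (Set.Icc 0 1) → ContDiffOn ℝ 1 h2 (Set.Icc 0 1) →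
      h1 0 = 0 → h2 0 = 0 →
      (1/2) * (∫ t in (0:ℝ)..1,
        (h1 t * derivWithin h2 (Set.Icc 0 1) t
          - h2 t * derivWithin h1 (Set.Icc 0 1) t)) = z →
      Real.pi * |z| ≤ (1/2) * ∫ t in (0:ℝ)..1,
        ((derivWithin h1 (Set.Icc 0 1) t) ^ 2 + (derivWithin h2 (Set.Icc 0 1) t) ^ 2)) ∧
    (0 < z →
      c19₁ z 0 = 0 ∧ c19₂ z 0 = 0 ∧
      (1/2) * (∫ t in (0:ℝ)..1,
        (c19₁ z t * derivWithin (c19₂ z) (Set.Icc 0 1) t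
          - c19₂ z t * derivWithin (c19₁ z) (Set.Icc 0 1) t)) = z ∧
      (1/2) * (∫ t in (0:ℝ)..1,
        ((derivWithin (c19₁ z) (Set.Icc 0 1) t) ^ 2
          + (derivWithin (c19₂ z) (Set.Icc 0 1) t) ^ 2)) = Real.pi * z) := by
  refine ⟨fun h1 h2 hh1 hh2 h10 h20 hA => ?_, fun hz =>
    ⟨by simp [c19₁], by simp [c19₂], area_c19 hz.le, energy_c19 hz.le⟩⟩
  have hUD : UniqueDiffOn ℝ (Icc (0:ℝ) 1) := uniqueDiffOn_Icc zero_lt_one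
  have key := pi_div_mul_abs_integral_area_le_integral_energy zero_lt_one
    (fun t ht => (hh1.differentiableOn one_ne_zero t ht).hasDerivWithinAt)
    (fun t ht => (hh2.differentiableOn one_ne_zero t ht).hasDerivWithinAt)
    (hh1.continuousOn_derivWithin hUD le_rfl) (hh2.continuousOn_derivWithin hUD le_rfl) h10 h20
  rw [sub_zero, div_one] at key
  rw [← hA, abs_mul, abs_of_pos one_half_pos]
  linarith
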